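/- Let w_1, ..., w_m be i.i.d. standard Gaussian random vectors on ℝ^d and let φ be the PRF map with m features. Let q, k ∈ ℝ^d with ‖q‖ ≤ R and ‖k‖ ≤ R for some R > 0. Then for every ε > 0, Pr(|⟨φ(q), φ(k)⟩ − exp(⟨q, k⟩)| ≥ ε·exp(⟨q, k⟩)) ≤ exp(4R²) / (m·ε²). -/

import Mathlib

open MeasureTheory ProbabilityTheory

/-- The joint law of `m` i.i.d. standard Gaussian random vectors on `ℝ^d`. -/
noncomputable def iidStdGaussian (m d : ℕ) : Measure (Fin m → Fin d → ℝ) :=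
  Measure.pi fun _ => Measure.pi fun _ => gaussianReal 0 1

/-- The Positive Random Feature (PRF) map with `m` features:
`φ(x)_i = (exp (−‖x‖²/2)/√m) · exp ⟨w_i, x⟩`. -/
noncomputable def prf (m d : ℕ) (W : Fin m → Fin d → ℝ) (x : Fin d → ℝ) : Fin m → ℝ :=
  fun i => (Real.exp (-(∑ j, (x j) ^ 2) / 2) / Real.sqrt m) * Real.exp (∑ j, W i j * x j)

/-! The estimator `⟨φ(q), φ(k)⟩` is the average of `m` i.i.d. copies of
`exp (-(‖q‖² + ‖k‖²)/2) · exp ⟨w, q + k⟩`. By the Gaussian moment generating function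
`E exp ⟨w, v⟩ = exp (‖v‖²/2)`, each copy has mean `exp ⟨q, k⟩` and second moment
`exp ‖q + k‖² · exp (2⟨q, k⟩)`, so the average has variance at most that over `m`. Chebyshev's
inequality and `‖q + k‖² ≤ 4R²` finish the proof. -/

open Real

section SampleSum

variable {ι E : Type*} [Fintype ι] [MeasurableSpace E] {μ : Measure E} [IsProbabilityMeasure μ]
  {f : E → ℝ}

lemma memLp_sum_comp_eval_pi {p : ENNReal} (hf : MemLp f p μ) :
    MemLp (fun W : ι → E => ∑ i, f (W i)) p (Measure.pi fun _ => μ) :=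
  memLp_finsetSum _ fun i _ => hf.comp_measurePreserving (measurePreserving_eval _ i)

lemma integral_sum_comp_eval_pi (hf : Integrable f μ) :
    ∫ W : ι → E, ∑ i, f (W i) ∂(Measure.pi fun _ => μ) = Fintype.card ι * ∫ x, f x ∂μ := by
  rw [integral_finsetSum _ fun i _ => integrable_comp_eval (μ := fun _ => μ) (i := i) hf]
  simp [integral_comp_eval (μ := fun _ => μ) hf.aestronglyMeasurable]

lemma variance_sum_comp_eval_pi (hf : MemLp f 2 μ) :
    Var[fun W : ι → E => ∑ i, f (W i); Measure.pi fun _ => μ] = Fintype.card ι * Var[f; μ] := by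
  rw [← Finset.sum_fn, variance_sum_pi fun _ => hf]
  simp

end SampleSum

section StdGaussianVector

variable {ι : Type*} [Fintype ι]

lemma integrable_exp_sum_mul_pi_gaussianReal (v : ι → ℝ) :
    Integrable (fun w : ι → ℝ => exp (∑ j, w j * v j)) (Measure.pi fun _ => gaussianReal 0 1) := by
  simp_rw [exp_sum]
  exact Integrable.fintype_prod fun j => by
    simpa only [mul_comm] using integrable_exp_mul_gaussianReal (μ := 0) (v := 1) (v j)

lemma integral_exp_sum_mul_pi_gaussianReal (v : ι → ℝ) :
    ∫ w : ι → ℝ, exp (∑ j, w j * v j) ∂(Measure.pi fun _ => gaussianReal 0 1) =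
      exp ((∑ j, v j ^ 2) / 2) := by
  simp_rw [Finset.sum_div, exp_sum]
  rw [integral_fintype_prod_eq_prod (fun j x => exp (x * v j))]
  refine Finset.prod_congr rfl fun j _ => ?_
  simpa [mgf, mul_comm] using congrFun (mgf_id_gaussianReal (μ := 0) (v := 1)) (v j)

end StdGaussianVector

section SumSq

variable {ι : Type*} [Fintype ι]

lemma sum_add_sq_eq (q k : ι → ℝ) :
    ∑ j, (q j + k j) ^ 2 = ∑ j, q j ^ 2 + ∑ j, k j ^ 2 + 2 * ∑ j, q j * k j := by
  simp only [add_sq, Finset.sum_add_distrib, Finset.mul_sum, mul_assoc]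
  ring

lemma sum_add_sq_le {q k : ι → ℝ} {R : ℝ} (hq : √(∑ j, q j ^ 2) ≤ R) (hk : √(∑ j, k j ^ 2) ≤ R) :
    ∑ j, (q j + k j) ^ 2 ≤ 4 * R ^ 2 := by
  have hQ := (sqrt_le_iff.1 hq).2
  have hK := (sqrt_le_iff.1 hk).2
  calc ∑ j, (q j + k j) ^ 2 ≤ ∑ j, (2 * q j ^ 2 + 2 * k j ^ 2) :=
        Finset.sum_le_sum fun j _ => by nlinarith [sq_nonneg (q j - k j)]
    _ = 2 * ∑ j, q j ^ 2 + 2 * ∑ j, k j ^ 2 := by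
        simp only [Finset.sum_add_distrib, Finset.mul_sum]
    _ ≤ 4 * R ^ 2 := by linarith

end SumSq

instance (m d : ℕ) : IsProbabilityMeasure (iidStdGaussian m d) := by
  unfold iidStdGaussian; infer_instance

section PRF

variable {d : ℕ} (q k : Fin d → ℝ)

/-- `m · φ(q)_i φ(k)_i` as a function of the feature `w = w_i`. -/
noncomputable def prfSample (w : Fin d → ℝ) : ℝ :=
  exp (-(∑ j, q j ^ 2 + ∑ j, k j ^ 2) / 2) * exp (∑ j, w j * (q j + k j))

lemma sum_prf_mul_prf (m : ℕ) (W : Fin m → Fin d → ℝ) :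
    ∑ i, prf m d W q i * prf m d W k i = (m : ℝ)⁻¹ * ∑ i, prfSample q k (W i) := by
  rw [Finset.mul_sum]
  refine Finset.sum_congr rfl fun i _ => ?_
  have hscale : exp (-(∑ j, q j ^ 2) / 2) * exp (-(∑ j, k j ^ 2) / 2) =
      exp (-(∑ j, q j ^ 2 + ∑ j, k j ^ 2) / 2) := by
    rw [← exp_add]; ring_nf
  have hfeature : exp (∑ j, W i j * q j) * exp (∑ j, W i j * k j) =
      exp (∑ j, W i j * (q j + k j)) := by
    simp only [← exp_add, ← Finset.sum_add_distrib, mul_add]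
  calc prf m d W q i * prf m d W k i
      = exp (-(∑ j, q j ^ 2) / 2) * exp (-(∑ j, k j ^ 2) / 2) / (√m * √m) *
          (exp (∑ j, W i j * q j) * exp (∑ j, W i j * k j)) := by
        simp only [prf]; ring
    _ = (m : ℝ)⁻¹ * prfSample q k (W i) := by
        rw [hscale, hfeature, Real.mul_self_sqrt (Nat.cast_nonneg m), prfSample]; ring

lemma prfSample_sq (w : Fin d → ℝ) :
    prfSample q k w ^ 2 =
      exp (-(∑ j, q j ^ 2 + ∑ j, k j ^ 2)) * exp (∑ j, w j * (2 * (q j + k j))) := by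
  simp only [prfSample, mul_pow, ← exp_nat_mul, Finset.mul_sum]
  congr 2 <;> [ring; exact Finset.sum_congr rfl fun j _ => by ring]

lemma memLp_prfSample : MemLp (prfSample q k) 2 (Measure.pi fun _ => gaussianReal 0 1) := by
  refine (memLp_two_iff_integrable_sq (f := prfSample q k)
    ((integrable_exp_sum_mul_pi_gaussianReal _).const_mul _).aestronglyMeasurable).2 ?_
  simp_rw [prfSample_sq]
  exact (integrable_exp_sum_mul_pi_gaussianReal _).const_mul _

lemma integral_prfSample :
    ∫ w, prfSample q k w ∂(Measure.pi fun _ => gaussianReal 0 1) = exp (∑ j, q j * k j) := by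
  simp only [prfSample]
  rw [integral_const_mul, integral_exp_sum_mul_pi_gaussianReal, ← exp_add, sum_add_sq_eq]
  ring_nf

lemma integral_prfSample_sq :
    ∫ w, prfSample q k w ^ 2 ∂(Measure.pi fun _ => gaussianReal 0 1) =
      exp (∑ j, (q j + k j) ^ 2) * exp (∑ j, q j * k j) ^ 2 := by
  simp_rw [prfSample_sq]
  rw [integral_const_mul, integral_exp_sum_mul_pi_gaussianReal, ← exp_add, sq (exp _),
    ← exp_add, ← exp_add]
  simp only [mul_pow, ← Finset.mul_sum, sum_add_sq_eq]
  ring_nf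

lemma memLp_sum_prf_mul_prf (m : ℕ) :
    MemLp (fun W => ∑ i, prf m d W q i * prf m d W k i) 2 (iidStdGaussian m d) := by
  simp_rw [sum_prf_mul_prf]
  exact (memLp_sum_comp_eval_pi (memLp_prfSample q k)).const_mul _

lemma integral_sum_prf_mul_prf {m : ℕ} (hm : 0 < m) :
    ∫ W, ∑ i, prf m d W q i * prf m d W k i ∂(iidStdGaussian m d) = exp (∑ j, q j * k j) := by
  simp_rw [sum_prf_mul_prf]
  rw [integral_const_mul, iidStdGaussian,
    integral_sum_comp_eval_pi ((memLp_prfSample q k).integrable one_le_two), integral_prfSample,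
    Fintype.card_fin, inv_mul_cancel_left₀ (by positivity)]

lemma variance_sum_prf_mul_prf_le (m : ℕ) :
    Var[fun W => ∑ i, prf m d W q i * prf m d W k i; iidStdGaussian m d] ≤
      exp (∑ j, (q j + k j) ^ 2) * exp (∑ j, q j * k j) ^ 2 / m := by
  simp_rw [sum_prf_mul_prf]
  rw [variance_const_mul, iidStdGaussian, variance_sum_comp_eval_pi (memLp_prfSample q k),
    Fintype.card_fin, ← integral_prfSample_sq]
  calc (m : ℝ)⁻¹ ^ 2 * (m * Var[prfSample q k; Measure.pi fun _ => gaussianReal 0 1])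
      ≤ (m : ℝ)⁻¹ ^ 2 * (m * ∫ w, prfSample q k w ^ 2 ∂(Measure.pi fun _ => gaussianReal 0 1)) := by
        gcongr
        exact variance_le_expectation_sq (memLp_prfSample q k).aestronglyMeasurable
    _ = _ := by
        rcases eq_or_ne (m : ℝ) 0 with hm | hm
        · simp [hm]
        · field_simp

end PRF

theorem prf_pointwise_concentration_general (m d : ℕ) (hm : 0 < m) (q k : Fin d → ℝ) (R : ℝ)
    (hq : Real.sqrt (∑ j, (q j) ^ 2) ≤ R)
    (hk : Real.sqrt (∑ j, (k j) ^ 2) ≤ R) (ε : ℝ) (hε : 0 < ε) :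
    iidStdGaussian m d
        {W | ε * Real.exp (∑ j, q j * k j) ≤
          |(∑ i, prf m d W q i * prf m d W k i) - Real.exp (∑ j, q j * k j)|}
      ≤ ENNReal.ofReal (Real.exp (4 * R ^ 2) / (m * ε ^ 2)) := by
  have hchebyshev := meas_ge_le_variance_div_sq (memLp_sum_prf_mul_prf q k m)
    (by positivity : 0 < ε * exp (∑ j, q j * k j))
  simp only [integral_sum_prf_mul_prf q k hm] at hchebyshev
  refine hchebyshev.trans (ENNReal.ofReal_le_ofReal ?_)
  calc _ ≤ exp (∑ j, (q j + k j) ^ 2) * exp (∑ j, q j * k j) ^ 2 / m /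
        (ε * exp (∑ j, q j * k j)) ^ 2 := by
        gcongr
        exact variance_sum_prf_mul_prf_le q k m
    _ = exp (∑ j, (q j + k j) ^ 2) / (m * ε ^ 2) := by field_simp
    _ ≤ exp (4 * R ^ 2) / (m * ε ^ 2) := by
        gcongr
        exact sum_add_sq_le hq hk

/-- Chebyshev-type concentration for the PRF estimator: if `‖q‖, ‖k‖ ≤ R` then
`Pr(|⟨φ(q), φ(k)⟩ − exp ⟨q, k⟩| ≥ ε exp ⟨q, k⟩) ≤ exp (4R²) / (m ε²)`. -/
theorem prf_pointwise_concentration (m d : ℕ) (hm : 0 < m) (q k : Fin d → ℝ) (R : ℝ)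
    (hR : 0 < R) (hq : Real.sqrt (∑ j, (q j) ^ 2) ≤ R)
    (hk : Real.sqrt (∑ j, (k j) ^ 2) ≤ R) (ε : ℝ) (hε : 0 < ε) :
    iidStdGaussian m d
        {W | ε * Real.exp (∑ j, q j * k j) ≤
          |(∑ i, prf m d W q i * prf m d W k i) - Real.exp (∑ j, q j * k j)|}
      ≤ ENNReal.ofReal (Real.exp (4 * R ^ 2) / (m * ε ^ 2)) :=
  prf_pointwise_concentration_general m d hm q k R hq hk ε hε
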